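/- Let ψ be a unital linear functional on ℂ⟨x₁, x₂, …⟩. If P ∈ ℂ⟨x₁, x₂, …⟩ satisfies (id ⊗ ψ)(∂ᵢ P) = 0 for every i ≥ 1, then P is a scalar multiple of 1. Equivalently, the kernel of the linear map P ↦ ((id ⊗ ψ)(∂₁P), (id ⊗ ψ)(∂₂P), …) consists exactly of the constants. -/

import Mathlib

open TensorProduct

/-- The product `x_{u(1)} ⋯ x_{u(n)}` of generators of the free algebra along a word. -/
noncomputable def wordProd (l : List ℕ) : FreeAlgebra ℂ ℕ :=
  (l.map (FreeAlgebra.ι ℂ)).prod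

/-- The partial difference quotient `∂ᵢ`, the ℂ-linear map determined on the basis of
words by `∂ᵢ(x_{u(1)}⋯x_{u(n)}) = Σ_{j : u(j) = i} x_{u(1)}⋯x_{u(j−1)} ⊗ x_{u(j+1)}⋯x_{u(n)}`
(here `i` indexes the generator `FreeAlgebra.ι ℂ i`). -/
noncomputable def dq (i : ℕ) :
    FreeAlgebra ℂ ℕ →ₗ[ℂ] FreeAlgebra ℂ ℕ ⊗[ℂ] FreeAlgebra ℂ ℕ :=
  (FreeAlgebra.basisFreeMonoid ℂ ℕ).constr ℂ fun w =>
    ∑ j ∈ Finset.range (FreeMonoid.toList w).length,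
      if (FreeMonoid.toList w).getD j 0 = i then
        wordProd ((FreeMonoid.toList w).take j) ⊗ₜ[ℂ]
          wordProd ((FreeMonoid.toList w).drop (j + 1))
      else 0

/-- The map `(id ⊗ ψ) : a ⊗ b ↦ ψ(b)·a`. -/
noncomputable def idTensor (ψ : FreeAlgebra ℂ ℕ →ₗ[ℂ] ℂ) :
    FreeAlgebra ℂ ℕ ⊗[ℂ] FreeAlgebra ℂ ℕ →ₗ[ℂ] FreeAlgebra ℂ ℕ :=
  TensorProduct.lift
    { toFun := fun a => ψ.smulRight a
      map_add' := by intro a b; ext c; simp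
      map_smul' := by
        intro c a
        ext b
        simp only [LinearMap.smulRight_apply, LinearMap.smul_apply, RingHom.id_apply]
        rw [smul_comm] }

/-- The map `(ψ ⊗ id) : a ⊗ b ↦ ψ(a)·b`. -/
noncomputable def tensorId (ψ : FreeAlgebra ℂ ℕ →ₗ[ℂ] ℂ) :
    FreeAlgebra ℂ ℕ ⊗[ℂ] FreeAlgebra ℂ ℕ →ₗ[ℂ] FreeAlgebra ℂ ℕ :=
  TensorProduct.lift
    { toFun := fun a => ψ a • (LinearMap.id : FreeAlgebra ℂ ℕ →ₗ[ℂ] FreeAlgebra ℂ ℕ)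
      map_add' := by intro a b; simp [add_smul]
      map_smul' := by intro c a; simp [smul_smul] }

/-!
Expand `P` in the basis of words and let `w = v xᵢ` be a word of maximal length occurring in `P`.
A word `w'` contributes to the coefficient of `v` in `(id ⊗ ψ)(∂ᵢ w')` only through a cut of `w'`
at position `|v|`; since `|w'| ≤ |v| + 1`, this cut exists only for `w' = v xᵢ`, and then its
right-hand piece is empty and is evaluated to `ψ 1 = 1`. So the coefficient of `v` in
`(id ⊗ ψ)(∂ᵢ P)` is the coefficient of `w` in `P`, which is nonzero. Hence only the empty word
occurs in `P`.
-/

open FreeAlgebra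

lemma List.take_eq_and_getD_eq_iff {α : Type*} {l v : List α} {a d : α} {j : ℕ}
    (hj : j < l.length) (hl : l.length ≤ v.length + 1) :
    l.take j = v ∧ l.getD j d = a ↔ l = v ++ [a] ∧ j = v.length := by
  constructor
  · rintro ⟨rfl, rfl⟩
    refine ⟨?_, by simp; omega⟩
    rw [List.getD_eq_getElem _ _ hj, List.take_concat_get', List.take_of_length_le]
    simp at hl; omega
  · rintro ⟨rfl, rfl⟩
    simp

lemma basisFreeMonoid_eq_wordProd (w : FreeMonoid ℕ) :
    basisFreeMonoid ℂ ℕ w = wordProd w.toList := by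
  simp [basisFreeMonoid, equivMonoidAlgebraFreeMonoid, AlgEquiv.ofAlgHom, FreeMonoid.lift_apply,
    wordProd]

lemma basisFreeMonoid_repr_wordProd (l : List ℕ) :
    (basisFreeMonoid ℂ ℕ).repr (wordProd l) = Finsupp.single (FreeMonoid.ofList l) 1 := by
  rw [← FreeMonoid.toList_ofList l, ← basisFreeMonoid_eq_wordProd, Module.Basis.repr_self,
    FreeMonoid.toList_ofList]

lemma dq_wordProd (i : ℕ) (l : List ℕ) :
    dq i (wordProd l) = ∑ j ∈ Finset.range l.length,
      if l.getD j 0 = i then wordProd (l.take j) ⊗ₜ[ℂ] wordProd (l.drop (j + 1)) else 0 := by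
  rw [← FreeMonoid.toList_ofList l, ← basisFreeMonoid_eq_wordProd, dq, Module.Basis.constr_basis]

lemma idTensor_tmul (ψ : FreeAlgebra ℂ ℕ →ₗ[ℂ] ℂ) (a b : FreeAlgebra ℂ ℕ) :
    idTensor ψ (a ⊗ₜ[ℂ] b) = ψ b • a :=
  rfl

lemma repr_idTensor_dq_wordProd_of_length_le (ψ : FreeAlgebra ℂ ℕ →ₗ[ℂ] ℂ) (hψ1 : ψ 1 = 1)
    (i : ℕ) {v l : List ℕ} (hl : l.length ≤ v.length + 1) :
    (basisFreeMonoid ℂ ℕ).repr (idTensor ψ (dq i (wordProd l))) (FreeMonoid.ofList v) =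
      if l = v ++ [i] then 1 else 0 := by
  have hterm : ∀ j ∈ Finset.range l.length,
      (basisFreeMonoid ℂ ℕ).repr (idTensor ψ (if l.getD j 0 = i then
          wordProd (l.take j) ⊗ₜ[ℂ] wordProd (l.drop (j + 1)) else 0)) (FreeMonoid.ofList v)
        = if l = v ++ [i] ∧ j = v.length then ψ (wordProd (l.drop (j + 1))) else 0 := by
    intro j hj
    simp only [← List.take_eq_and_getD_eq_iff (d := 0) (Finset.mem_range.mp hj) hl]
    split_ifs <;> simp_all [idTensor_tmul, basisFreeMonoid_repr_wordProd]
  rw [dq_wordProd, map_sum, map_sum, Finset.sum_apply', Finset.sum_congr rfl hterm]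
  split_ifs with hlv
  · subst hlv
    simp only [true_and, Finset.sum_ite_eq', Finset.mem_range, List.length_append,
      List.length_singleton, lt_add_one, if_true]
    rw [List.drop_eq_nil_of_le (by simp)]
    exact hψ1
  · simp [hlv]

lemma repr_idTensor_dq_of_length_le (ψ : FreeAlgebra ℂ ℕ →ₗ[ℂ] ℂ) (hψ1 : ψ 1 = 1)
    (i : ℕ) {v : List ℕ} (P : FreeAlgebra ℂ ℕ)
    (hP : ∀ w ∈ ((basisFreeMonoid ℂ ℕ).repr P).support, w.length ≤ v.length + 1) :
    (basisFreeMonoid ℂ ℕ).repr (idTensor ψ (dq i P)) (FreeMonoid.ofList v) =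
      (basisFreeMonoid ℂ ℕ).repr P (FreeMonoid.ofList (v ++ [i])) := by
  classical
  set B := basisFreeMonoid ℂ ℕ
  conv_lhs => rw [← B.linearCombination_repr P, Finsupp.linearCombination_apply]
  rw [map_finsuppSum, map_finsuppSum, map_finsuppSum, Finsupp.sum_apply]
  calc (B.repr P).sum (fun w c => B.repr (idTensor ψ (dq i (c • B w))) (FreeMonoid.ofList v))
      = (B.repr P).sum (fun w c => if w = FreeMonoid.ofList (v ++ [i]) then c else 0) := by
        refine Finsupp.sum_congr fun w hw => ?_
        rw [map_smul, map_smul, map_smul, Finsupp.smul_apply, basisFreeMonoid_eq_wordProd,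
          repr_idTensor_dq_wordProd_of_length_le ψ hψ1 i (hP w hw)]
        simp [← FreeMonoid.toList.eq_symm_apply]
    _ = _ := Finsupp.sum_ite_self_eq' _ _

lemma exists_eq_algebraMap_of_repr_support_subset (P : FreeAlgebra ℂ ℕ)
    (hP : ((basisFreeMonoid ℂ ℕ).repr P).support ⊆ {1}) :
    ∃ c : ℂ, P = algebraMap ℂ (FreeAlgebra ℂ ℕ) c := by
  obtain ⟨c, hc⟩ := Finsupp.support_subset_singleton'.mp hP
  refine ⟨c, ?_⟩
  rw [← (basisFreeMonoid ℂ ℕ).repr.symm_apply_apply P, hc, Module.Basis.repr_symm_single,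
    basisFreeMonoid_eq_wordProd, Algebra.algebraMap_eq_smul_one]
  rfl

/-- if `(id ⊗ ψ)(∂ᵢ P) = 0` for every generator index `i`, then `P` is a
scalar multiple of `1`; i.e. the kernel of `P ↦ ((id ⊗ ψ)(∂ᵢ P))ᵢ` consists exactly of
the constants. -/
theorem kernel_of_difference_quotients_is_constants
    (ψ : FreeAlgebra ℂ ℕ →ₗ[ℂ] ℂ) (hψ1 : ψ 1 = 1)
    (P : FreeAlgebra ℂ ℕ) (h : ∀ i : ℕ, idTensor ψ (dq i P) = 0) :
    ∃ c : ℂ, P = algebraMap ℂ (FreeAlgebra ℂ ℕ) c := by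
  refine exists_eq_algebraMap_of_repr_support_subset P fun w₀ hw₀ => Finset.mem_singleton.mpr ?_
  by_contra hw₀1
  obtain ⟨w, hw, hmax⟩ := Finset.exists_max_image _ FreeMonoid.length ⟨w₀, hw₀⟩
  have hw1 : w ≠ 1 := fun hw1 =>
    hw₀1 (FreeMonoid.length_eq_zero.mp (by simpa [hw1] using hmax w₀ hw₀))
  obtain ⟨v, i, hvi⟩ : ∃ v i, w.toList = v ++ [i] :=
    (List.eq_nil_or_concat' w.toList).resolve_left fun h => hw1 (FreeMonoid.toList.injective h)
  have hwv : w.length = v.length + 1 := by simp [FreeMonoid.length, hvi]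
  have hcoeff := repr_idTensor_dq_of_length_le ψ hψ1 i P fun w' hw' => hwv ▸ hmax w' hw'
  rw [h i, map_zero, ← hvi, FreeMonoid.ofList_toList] at hcoeff
  exact (Finsupp.mem_support_iff.mp hw) hcoeff.symm
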